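/- Consider the collocation projection $\Pi_n$ on $C(\Omega)^d$, given componentwise by $(\Pi_n u)(x) = \sum_{i=1}^{d_n} \sigma_i(x)\,u(x_i)$ where $\sigma_i(x) := \sum_{j=1}^{d_n} (P_n^{-1})_{ij}\,\phi_j(x)$. Suppose every $\sigma_i$ has nonnegative values, $Y_+$ is solid, and for every $x \in \Omega$ there exists an index $i_0 \in \{1,\dots,d_n\}$ with $\sigma_{i_0}(x) > 0$. Then $\Pi_n$ maps the interior of $C(\Omega)^d_+$ into the interior of $C(\Omega)^d_+$. -/

import Mathlib

/-!
Let `u` be interior to `C(Ω)^d₊`, so that `u x + w ∈ Y₊` for all `x` and all `‖w‖ < ε`.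
The weights `σᵢ` are nonnegative, and their sum is positive, hence `≥ c > 0` on the compact
space `Ω`. A perturbation `w` of `(Πₙ u)(x)` with `‖w‖ < c ε` is spread over the weights:
`(Πₙ u)(x) + w = ∑ᵢ σᵢ(x) (u(xᵢ) + w / ∑ⱼ σⱼ(x))`, a nonnegative combination of points of `Y₊`.
-/

open MeasureTheory

/-- An order cone in a real topological vector space. -/
def IsOrderCone {E : Type*} [AddCommGroup E] [Module ℝ E] [TopologicalSpace E]
    (C : Set E) : Prop :=
  C.Nonempty ∧ IsClosed C ∧ Convex ℝ C ∧
    (∀ t : ℝ, 0 ≤ t → ∀ x ∈ C, t • x ∈ C) ∧ C ∩ (-C) = {0}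

namespace IsOrderCone

variable {E : Type*} [AddCommGroup E] [Module ℝ E] [TopologicalSpace E] {C : Set E}

theorem zero_mem (hC : IsOrderCone C) : (0 : E) ∈ C := by
  obtain ⟨⟨y, hy⟩, -, -, hsmul, -⟩ := hC
  simpa using hsmul 0 le_rfl y hy

theorem add_mem (hC : IsOrderCone C) {a b : E} (ha : a ∈ C) (hb : b ∈ C) : a + b ∈ C := by
  obtain ⟨-, -, hconv, hsmul, -⟩ := hC
  have hmid := hconv ha hb (by norm_num : (0 : ℝ) ≤ 1 / 2) (by norm_num : (0 : ℝ) ≤ 1 / 2)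
    (by norm_num)
  simpa [smul_smul, smul_add] using hsmul 2 (by norm_num) _ hmid

theorem sum_smul_mem (hC : IsOrderCone C) {ι : Type*} (s : Finset ι) {c : ι → ℝ} {y : ι → E}
    (hc : ∀ i ∈ s, 0 ≤ c i) (hy : ∀ i ∈ s, y i ∈ C) : ∑ i ∈ s, c i • y i ∈ C :=
  Finset.sum_induction _ (· ∈ C) (fun _ _ => hC.add_mem) hC.zero_mem
    fun i hi => hC.2.2.2.1 _ (hc i hi) _ (hy i hi)

end IsOrderCone

theorem IsOrderCone.sum_smul_add_mem {E : Type*} [NormedAddCommGroup E] [NormedSpace ℝ E]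
    {C : Set E} (hC : IsOrderCone C) {ι : Type*} [Fintype ι] {σ : ι → ℝ} {y : ι → E} {ε : ℝ}
    (hσ : ∀ i, 0 ≤ σ i) (hy : ∀ i w, ‖w‖ < ε → y i + w ∈ C) {w : E}
    (hw : ‖w‖ < (∑ i, σ i) * ε) : ∑ i, σ i • y i + w ∈ C := by
  set s := ∑ i, σ i
  have hs : 0 < s := by
    refine (Finset.sum_nonneg fun i _ => hσ i).lt_of_ne fun hs => ?_
    rw [show s = 0 from hs.symm, zero_mul] at hw
    exact (norm_nonneg w).not_gt hw
  have hw' : ‖s⁻¹ • w‖ < ε := by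
    rw [norm_smul, norm_inv, Real.norm_of_nonneg hs.le, inv_mul_lt_iff₀ hs]
    exact hw
  have hsplit : ∑ i, σ i • y i + w = ∑ i, σ i • (y i + s⁻¹ • w) := by
    conv_lhs => rw [← smul_inv_smul₀ hs.ne' w]
    simp only [smul_add, Finset.sum_add_distrib, Finset.sum_smul, s]
  rw [hsplit]
  exact hC.sum_smul_mem _ (fun i _ => hσ i) fun i _ => hy i _ hw'

theorem ContinuousMap.mem_interior_setOf_forall_mem_iff {Ω E : Type*} [TopologicalSpace Ω]
    [CompactSpace Ω] [NormedAddCommGroup E] {Y : Set E} {f : C(Ω, E)} :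
    f ∈ interior {g : C(Ω, E) | ∀ x, g x ∈ Y} ↔
      ∃ ε > 0, ∀ x w, ‖w‖ < ε → f x + w ∈ Y := by
  rw [mem_interior_iff_mem_nhds, Metric.mem_nhds_iff]
  constructor
  · rintro ⟨ε, hε, hball⟩
    refine ⟨ε, hε, fun x w hw => ?_⟩
    have hconst : f + ContinuousMap.const Ω w ∈ Metric.ball f ε := by
      rw [Metric.mem_ball, dist_eq_norm, add_sub_cancel_left]
      exact ((ContinuousMap.norm_le _ (norm_nonneg w)).mpr fun _ => le_rfl).trans_lt hw
    exact hball hconst x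
  · rintro ⟨ε, hε, h⟩
    refine ⟨ε, hε, fun g hg x => ?_⟩
    have hgx := h x (g x - f x) (by rw [← dist_eq_norm]; exact (dist_apply_le_dist x).trans_lt hg)
    rwa [add_sub_cancel] at hgx

theorem stmt15_general {d m : ℕ} {Ω : Type*} [MetricSpace Ω] [CompactSpace Ω]
    (Y : Set (EuclideanSpace ℝ (Fin d))) (hY : IsOrderCone Y)
    (φ : Fin m → C(Ω, ℝ))
    (xs : Fin m → Ω)
    (P : Matrix (Fin m) (Fin m) ℝ)
    (σ : Fin m → Ω → ℝ) (hσ : ∀ i x, σ i x = ∑ j, P⁻¹ i j * φ j x)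
    (hσpos : ∀ i x, 0 ≤ σ i x)
    (hσstar : ∀ x : Ω, ∃ i, 0 < σ i x)
    (u : C(Ω, EuclideanSpace ℝ (Fin d)))
    (hu : u ∈ interior {f : C(Ω, EuclideanSpace ℝ (Fin d)) | ∀ x, f x ∈ Y}) :
    ∃ v : C(Ω, EuclideanSpace ℝ (Fin d)),
      (∀ x : Ω, v x = ∑ i, σ i x • u (xs i)) ∧
      v ∈ interior {f : C(Ω, EuclideanSpace ℝ (Fin d)) | ∀ x, f x ∈ Y} := by
  obtain ⟨ε, hε, hu⟩ := ContinuousMap.mem_interior_setOf_forall_mem_iff.mp hu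
  have hσcont : ∀ i, Continuous (σ i) := fun i => by
    rw [show σ i = fun x => ∑ j, P⁻¹ i j * φ j x from funext (hσ i)]
    fun_prop
  obtain ⟨c, hc, hcσ⟩ : ∃ c, 0 < c ∧ ∀ x ∈ Set.univ, c ≤ ∑ i, σ i x :=
    isCompact_univ.exists_forall_le' (by fun_prop) fun x _ =>
      let ⟨i, hi⟩ := hσstar x
      Finset.sum_pos' (fun j _ => hσpos j x) ⟨i, Finset.mem_univ i, hi⟩
  refine ⟨⟨fun x => ∑ i, σ i x • u (xs i), by fun_prop⟩, fun _ => rfl, ?_⟩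
  refine ContinuousMap.mem_interior_setOf_forall_mem_iff.mpr
    ⟨c * ε, mul_pos hc hε, fun x w hw => ?_⟩
  exact hY.sum_smul_add_mem (hσpos · x) (fun i => hu (xs i))
    (hw.trans_le (mul_le_mul_of_nonneg_right (hcσ x trivial) hε.le))

/-- If all functions `σᵢ` of a collocation method are nonnegative, `Y₊` is solid, and
for every `x` some `σᵢ₀(x) > 0`, then the collocation projection
`(Πₙ u)(x) = ∑ᵢ σᵢ(x) u(xᵢ)` maps the interior of `C(Ω)^d₊` into the interior of
`C(Ω)^d₊`. -/
theorem stmt15 {d m : ℕ} {Ω : Type*} [MetricSpace Ω] [CompactSpace Ω]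
    (Y : Set (EuclideanSpace ℝ (Fin d))) (hY : IsOrderCone Y)
    (hsolid : (interior Y).Nonempty)
    (φ : Fin m → C(Ω, ℝ)) (hφ : LinearIndependent ℝ φ)
    (xs : Fin m → Ω) (hxs : Function.Injective xs)
    (P : Matrix (Fin m) (Fin m) ℝ) (hP : P = Matrix.of fun i j => φ i (xs j))
    (hPunit : IsUnit P.det)
    (σ : Fin m → Ω → ℝ) (hσ : ∀ i x, σ i x = ∑ j, P⁻¹ i j * φ j x)
    (hσpos : ∀ i x, 0 ≤ σ i x)
    (hσstar : ∀ x : Ω, ∃ i, 0 < σ i x)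
    (u : C(Ω, EuclideanSpace ℝ (Fin d)))
    (hu : u ∈ interior {f : C(Ω, EuclideanSpace ℝ (Fin d)) | ∀ x, f x ∈ Y}) :
    ∃ v : C(Ω, EuclideanSpace ℝ (Fin d)),
      (∀ x : Ω, v x = ∑ i, σ i x • u (xs i)) ∧
      v ∈ interior {f : C(Ω, EuclideanSpace ℝ (Fin d)) | ∀ x, f x ∈ Y} :=
  stmt15_general Y hY φ xs P σ hσ hσpos hσstar u hu
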